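/- arXiv:2605.24756 — 2 statements merged into one kernel-verified Lean document; each statement's English description precedes it below -/
import Mathlib

section
/- Let q₁ = 1/2 and let q₂ be a random variable taking values 0.7 and 0.3 each with probability 1/2, with P(Y=1 | q₂) = q₂. Define the truthful averaged forecast C_q := (q₁ + q₂)/2 and the modified adapted trace G₁ = 1/2, G₂ = 2q₂ − 1/2 with C_G := (G₁+G₂)/2 = q₂. Then E[(C_G − Y)²] = E[(q₂ − Y)²] < E[(C_q − Y)²], with the gap equal to 0.01. -/
/-!
Conditionally on `q₂`, `Y` has mean `q₂`, so for every `q₂`-measurable forecast `F` the cross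
term in `(F - Y)² = (q₂ - Y)² + (F - q₂)² + 2 (F - q₂)(q₂ - Y)` integrates to zero (pull
`F - q₂` out of the conditional expectation). Hence
`E[(F - Y)²] = E[(q₂ - Y)²] + E[(F - q₂)²]`, and for `F = (1/2 + q₂)/2` the last integrand
is `(q₂ - 1/2)² / 4 = 0.01` pointwise because `q₂ = 1/2 ± 0.2`.
-/

open MeasureTheory

section Orthogonality

variable {Ω : Type*} {m m0 : MeasurableSpace Ω} {μ : Measure Ω}

theorem integral_mul_eq_zero_of_condExp_ae_eq_zero {G Z : Ω → ℝ} (hm : m ≤ m0)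
    [SigmaFinite (μ.trim hm)] (hG : StronglyMeasurable[m] G) (hGZ : Integrable (G * Z) μ)
    (hZ : Integrable Z μ) (hcond : μ[Z | m] =ᵐ[μ] 0) :
    ∫ ω, G ω * Z ω ∂μ = 0 := by
  calc ∫ ω, G ω * Z ω ∂μ = ∫ ω, μ[G * Z | m] ω ∂μ := (integral_condExp hm).symm
    _ = ∫ ω, G ω * μ[Z | m] ω ∂μ :=
        integral_congr_ae (condExp_mul_of_stronglyMeasurable_left hG hGZ hZ)
    _ = 0 := by
        rw [integral_eq_zero_of_ae]
        filter_upwards [hcond] with ω hω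
        simp [hω]

theorem integral_sq_sub_eq_add_of_condExp {F X Y : Ω → ℝ} (hm : m ≤ m0) [IsFiniteMeasure μ]
    (hF : StronglyMeasurable[m] F) (hX : StronglyMeasurable[m] X)
    (hF2 : MemLp F 2 μ) (hX2 : MemLp X 2 μ) (hY2 : MemLp Y 2 μ)
    (hcond : μ[Y | m] =ᵐ[μ] X) :
    ∫ ω, (F ω - Y ω) ^ 2 ∂μ
      = ∫ ω, (X ω - Y ω) ^ 2 ∂μ + ∫ ω, (F ω - X ω) ^ 2 ∂μ := by
  have hFX : MemLp (F - X) 2 μ := hF2.sub hX2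
  have hXY : MemLp (X - Y) 2 μ := hX2.sub hY2
  have hcross : ∫ ω, (F - X) ω * (X - Y) ω ∂μ = 0 := by
    refine integral_mul_eq_zero_of_condExp_ae_eq_zero hm (hF.sub hX) (hFX.integrable_mul hXY)
      (hXY.integrable one_le_two) ?_
    have hXi : Integrable X μ := hX2.integrable one_le_two
    filter_upwards [condExp_sub hXi (hY2.integrable one_le_two) m, hcond] with ω hsub hY
    simp [hsub, hY, condExp_of_stronglyMeasurable hm hX hXi]
  have hsplit : ∀ ω, (F ω - Y ω) ^ 2
      = ((X ω - Y ω) ^ 2 + (F ω - X ω) ^ 2) + 2 * ((F - X) ω * (X - Y) ω) := by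
    intro ω; simp only [Pi.sub_apply]; ring
  have hXY_sq : Integrable (fun ω => (X ω - Y ω) ^ 2) μ := hXY.integrable_sq
  have hFX_sq : Integrable (fun ω => (F ω - X ω) ^ 2) μ := hFX.integrable_sq
  have hprod : Integrable (fun ω => 2 * ((F - X) ω * (X - Y) ω)) μ :=
    (hFX.integrable_mul hXY).const_mul 2
  have hsum : Integrable (fun ω => (X ω - Y ω) ^ 2 + (F ω - X ω) ^ 2) μ := hXY_sq.add hFX_sq
  simp_rw [hsplit]
  rw [integral_add hsum hprod, integral_add hXY_sq hFX_sq, integral_const_mul,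
    hcross, mul_zero, add_zero]

end Orthogonality

theorem avg_aggregator_truthful_trace_suboptimal_general
    {Ω : Type*} {m0 : MeasurableSpace Ω} (μ : Measure Ω) [IsProbabilityMeasure μ]
    (Y q₂ : Ω → ℝ) (hY : Measurable Y) (hq₂ : Measurable q₂)
    (hY01 : ∀ ω, Y ω = 0 ∨ Y ω = 1)
    (hq₂vals : ∀ ω, q₂ ω = 0.7 ∨ q₂ ω = 0.3)
    -- P(Y = 1 | q₂) = q₂
    (hcond : μ[Y | MeasurableSpace.comap q₂ inferInstance] =ᵐ[μ] q₂) :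
    (∫ ω, (q₂ ω - Y ω)^2 ∂μ) < (∫ ω, ((1/2 + q₂ ω)/2 - Y ω)^2 ∂μ)
    ∧ (∫ ω, ((1/2 + q₂ ω)/2 - Y ω)^2 ∂μ) = (∫ ω, (q₂ ω - Y ω)^2 ∂μ) + 0.01 := by
  set m := MeasurableSpace.comap q₂ inferInstance
  have hFm : Measurable[m] fun ω => (1/2 + q₂ ω)/2 :=
    ((comap_measurable q₂).const_add _).div_const 2
  have hq₂2 : MemLp q₂ 2 μ :=
    MemLp.of_bound hq₂.aestronglyMeasurable 1 <| .of_forall fun ω => by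
      rcases hq₂vals ω with h | h <;> norm_num [h, abs_le]
  have hY2 : MemLp Y 2 μ :=
    MemLp.of_bound hY.aestronglyMeasurable 1 <| .of_forall fun ω => by
      rcases hY01 ω with h | h <;> norm_num [h]
  have hF2 : MemLp (fun ω => (1/2 + q₂ ω)/2) 2 μ :=
    MemLp.of_bound (hFm.mono hq₂.comap_le le_rfl).aestronglyMeasurable 1 <|
      .of_forall fun ω => by rcases hq₂vals ω with h | h <;> norm_num [h, abs_le]
  have hgap : ∀ ω, ((1/2 + q₂ ω)/2 - q₂ ω) ^ 2 = 0.01 := fun ω => by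
    rcases hq₂vals ω with h | h <;> norm_num [h]
  have hdecomp := integral_sq_sub_eq_add_of_condExp hq₂.comap_le hFm.stronglyMeasurable
    (comap_measurable q₂).stronglyMeasurable hF2 hq₂2 hY2 hcond
  simp only [hgap, integral_const, probReal_univ, smul_eq_mul, one_mul] at hdecomp
  exact ⟨by linarith, hdecomp⟩

theorem avg_aggregator_truthful_trace_suboptimal
    {Ω : Type*} {m0 : MeasurableSpace Ω} (μ : Measure Ω) [IsProbabilityMeasure μ]
    (Y q₂ : Ω → ℝ) (hY : Measurable Y) (hq₂ : Measurable q₂)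
    (hY01 : ∀ ω, Y ω = 0 ∨ Y ω = 1)
    (hq₂vals : ∀ ω, q₂ ω = 0.7 ∨ q₂ ω = 0.3)
    (h07 : μ {ω | q₂ ω = 0.7} = 1/2)
    (h03 : μ {ω | q₂ ω = 0.3} = 1/2)
    -- P(Y = 1 | q₂) = q₂
    (hcond : μ[Y | MeasurableSpace.comap q₂ inferInstance] =ᵐ[μ] q₂) :
    (∫ ω, (q₂ ω - Y ω)^2 ∂μ) < (∫ ω, ((1/2 + q₂ ω)/2 - Y ω)^2 ∂μ)
    ∧ (∫ ω, ((1/2 + q₂ ω)/2 - Y ω)^2 ∂μ) = (∫ ω, (q₂ ω - Y ω)^2 ∂μ) + 0.01 :=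
  avg_aggregator_truthful_trace_suboptimal_general (m0 := m0) μ Y q₂ hY hq₂ hY01 hq₂vals hcond
end

section
/- Let q₁ = 1/2 and let q₂ take values 0.7 and 0.3 each with probability 1/2, with P(Y=1 | q₂) = q₂. Define the min-aggregated truthful scalar min(q₁, q₂) and the non-truthful trace G₁ = 1, G₂ = q₂ with min(G₁, G₂) = q₂. Then E[(min(G₁,G₂) − Y)²] < E[(min(q₁,q₂) − Y)²], with the expected-loss gap equal to 0.02. -/
/-!
Since `Y² = Y`, the squared loss of any forecast `F` that is a bounded function of `q₂` is
`F² + (1 - 2F) Y`, and pulling `1 - 2F` out of the conditional expectation replaces `Y` by `q₂`: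
`E[(F - Y)²] = E[(F - q₂)²] + E[q₂ (1 - q₂)]` (Brier decomposition). The trace forecast `q₂`
has no calibration term, while `min (1/2) q₂` misses by `0.2` on `{q₂ = 0.7}`, which costs
`0.04 · 1/2 = 0.02`; the common refinement term is `0.7 · 0.3 = 0.21`.
-/

open MeasureTheory

section BrierDecomposition

variable {Ω : Type*} {m m0 : MeasurableSpace Ω} {μ : Measure Ω} {Y q F : Ω → ℝ} {C : ℝ}

theorem integral_mul_eq_integral_mul_of_condExp_ae_eq (hm : m ≤ m0) [SigmaFinite (μ.trim hm)]
    (hY : Integrable Y μ) (hF : StronglyMeasurable[m] F) (hFC : ∀ᵐ ω ∂μ, ‖F ω‖ ≤ C)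
    (hYq : μ[Y | m] =ᵐ[μ] q) :
    ∫ ω, F ω * Y ω ∂μ = ∫ ω, F ω * q ω ∂μ :=
  calc ∫ ω, F ω * Y ω ∂μ = ∫ ω, μ[F * Y | m] ω ∂μ := (integral_condExp hm).symm
    _ = ∫ ω, F ω * μ[Y | m] ω ∂μ := integral_congr_ae <| condExp_mul_of_stronglyMeasurable_left
          hF (hY.bdd_mul (hF.mono hm).aestronglyMeasurable hFC) hY
    _ = ∫ ω, F ω * q ω ∂μ := integral_congr_ae <| (Filter.EventuallyEq.refl _ F).mul hYq

theorem integral_sq_sub_eq_of_condExp_ae_eq [IsFiniteMeasure μ] (hm : m ≤ m0)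
    (hY : Integrable Y μ) (hY01 : ∀ ω, Y ω = 0 ∨ Y ω = 1)
    (hF : StronglyMeasurable[m] F) (hFC : ∀ᵐ ω ∂μ, ‖F ω‖ ≤ C)
    (hYq : μ[Y | m] =ᵐ[μ] q) :
    ∫ ω, (F ω - Y ω) ^ 2 ∂μ = ∫ ω, ((F ω - q ω) ^ 2 + q ω * (1 - q ω)) ∂μ := by
  have hq : Integrable q μ := integrable_condExp.congr hYq
  have hF' : AEStronglyMeasurable F μ := (hF.mono hm).aestronglyMeasurable
  have hF2 : Integrable (fun ω => F ω ^ 2) μ := by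
    simpa only [sq] using (Integrable.of_bound hF' C hFC).bdd_mul hF' hFC
  have hG : StronglyMeasurable[m] (fun ω => 1 - 2 * F ω) :=
    stronglyMeasurable_const.sub (stronglyMeasurable_const.mul hF)
  have hGC : ∀ᵐ ω ∂μ, ‖1 - 2 * F ω‖ ≤ 1 + 2 * C := by
    filter_upwards [hFC] with ω hω
    rw [Real.norm_eq_abs] at hω ⊢
    obtain ⟨h₁, h₂⟩ := abs_le.1 hω
    exact abs_le.2 ⟨by linarith, by linarith⟩
  calc ∫ ω, (F ω - Y ω) ^ 2 ∂μ = ∫ ω, (F ω ^ 2 + (1 - 2 * F ω) * Y ω) ∂μ := by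
        congr with ω
        rcases hY01 ω with h | h <;> rw [h] <;> ring
    _ = ∫ ω, (F ω ^ 2 + (1 - 2 * F ω) * q ω) ∂μ := by
        rw [integral_add hF2 (hY.bdd_mul (hG.mono hm).aestronglyMeasurable hGC),
          integral_add hF2 (hq.bdd_mul (hG.mono hm).aestronglyMeasurable hGC),
          integral_mul_eq_integral_mul_of_condExp_ae_eq hm hY hG hGC hYq]
    _ = ∫ ω, ((F ω - q ω) ^ 2 + q ω * (1 - q ω)) ∂μ := by
        congr with ω
        ring

end BrierDecomposition

theorem min_aggregator_truthful_trace_suboptimal_general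
    {Ω : Type*} {m0 : MeasurableSpace Ω} (μ : Measure Ω) [IsProbabilityMeasure μ]
    (Y q₂ : Ω → ℝ) (hY : Measurable Y) (hq₂ : Measurable q₂)
    (hY01 : ∀ ω, Y ω = 0 ∨ Y ω = 1)
    (hq₂vals : ∀ ω, q₂ ω = 0.7 ∨ q₂ ω = 0.3)
    (h07 : μ {ω | q₂ ω = 0.7} = 1/2)
    -- P(Y = 1 | q₂) = q₂
    (hcond : μ[Y | MeasurableSpace.comap q₂ inferInstance] =ᵐ[μ] q₂) :
    (∫ ω, (min 1 (q₂ ω) - Y ω)^2 ∂μ) < (∫ ω, (min (1/2) (q₂ ω) - Y ω)^2 ∂μ)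
    ∧ (∫ ω, (min (1/2) (q₂ ω) - Y ω)^2 ∂μ)
        = (∫ ω, (min 1 (q₂ ω) - Y ω)^2 ∂μ) + 0.02 := by
  have hYint : Integrable Y μ :=
    Integrable.of_bound hY.aestronglyMeasurable 1 <| .of_forall fun ω => by
      rcases hY01 ω with h | h <;> simp [h]
  have hq₂01 (ω : Ω) : 0 ≤ q₂ ω ∧ q₂ ω ≤ 1 := by
    rcases hq₂vals ω with h | h <;> rw [h] <;> norm_num
  have brier (c : ℝ) (hc : 0 ≤ c) :
      ∫ ω, (min c (q₂ ω) - Y ω) ^ 2 ∂μ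
        = ∫ ω, ((min c (q₂ ω) - q₂ ω) ^ 2 + q₂ ω * (1 - q₂ ω)) ∂μ :=
    integral_sq_sub_eq_of_condExp_ae_eq hq₂.comap_le hYint hY01
      ((measurable_const.min measurable_id).comp (comap_measurable q₂)).stronglyMeasurable
      (C := 1) (.of_forall fun ω => abs_le.2
        ⟨by linarith [le_min hc (hq₂01 ω).1], (min_le_right _ _).trans (hq₂01 ω).2⟩) hcond
  have hA : MeasurableSet {ω | q₂ ω = 0.7} := hq₂ (measurableSet_singleton _)
  have hloss₁ : ∫ ω, (min 1 (q₂ ω) - Y ω)^2 ∂μ = 0.21 := by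
    have h (ω : Ω) : (min 1 (q₂ ω) - q₂ ω) ^ 2 + q₂ ω * (1 - q₂ ω) = 0.21 := by
      rcases hq₂vals ω with h | h <;> rw [h] <;> norm_num
    simp [brier 1 zero_le_one, h]
  have hloss₂ : ∫ ω, (min (1/2) (q₂ ω) - Y ω)^2 ∂μ = 0.23 := by
    have h (ω : Ω) : (min (1/2) (q₂ ω) - q₂ ω) ^ 2 + q₂ ω * (1 - q₂ ω)
        = {ω | q₂ ω = 0.7}.indicator (fun _ => 0.04) ω + 0.21 := by
      rcases hq₂vals ω with h | h <;> simp only [Set.indicator_apply, Set.mem_ofPred_eq, h] <;>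
        norm_num
    rw [brier (1/2) (by norm_num)]
    simp only [h]
    rw [integral_add ((integrable_const _).indicator hA) (integrable_const _),
      integral_indicator_const _ hA, measureReal_def, h07]
    norm_num
  rw [hloss₁, hloss₂]
  norm_num

theorem min_aggregator_truthful_trace_suboptimal
    {Ω : Type*} {m0 : MeasurableSpace Ω} (μ : Measure Ω) [IsProbabilityMeasure μ]
    (Y q₂ : Ω → ℝ) (hY : Measurable Y) (hq₂ : Measurable q₂)
    (hY01 : ∀ ω, Y ω = 0 ∨ Y ω = 1)
    (hq₂vals : ∀ ω, q₂ ω = 0.7 ∨ q₂ ω = 0.3)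
    (h07 : μ {ω | q₂ ω = 0.7} = 1/2)
    (h03 : μ {ω | q₂ ω = 0.3} = 1/2)
    -- P(Y = 1 | q₂) = q₂
    (hcond : μ[Y | MeasurableSpace.comap q₂ inferInstance] =ᵐ[μ] q₂) :
    (∫ ω, (min 1 (q₂ ω) - Y ω)^2 ∂μ) < (∫ ω, (min (1/2) (q₂ ω) - Y ω)^2 ∂μ)
    ∧ (∫ ω, (min (1/2) (q₂ ω) - Y ω)^2 ∂μ)
        = (∫ ω, (min 1 (q₂ ω) - Y ω)^2 ∂μ) + 0.02 :=
  min_aggregator_truthful_trace_suboptimal_general (m0 := m0) μ Y q₂ hY hq₂ hY01 hq₂vals h07 hcond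
end
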